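/- arXiv:1702.08109 — 5 statements merged into one kernel-verified Lean document; each statement's English description precedes it below -/
import Mathlib

section
/- Let S = [α₁,β₁] × ⋯ × [α_d,β_d] ⊂ ℝ^d be a (closed) box and suppose f^n : S → [-∞,∞] hypo-converge to f, where each f^n is nondecreasing, i.e., f^n(x) ≤ f^n(y) whenever x,y ∈ S and x ≤ y componentwise. Then f is nondecreasing in the same sense. -/
open Filter Topology MeasureTheory

/-- Hypo-convergence of `fn` to `f` on `S`, via the sequential characterization. -/
def HypoConverges {E : Type*} [TopologicalSpace E] (S : Set E)
    (fn : ℕ → E → EReal) (f : E → EReal) : Prop :=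
  (∀ x ∈ S, ∀ xs : ℕ → E, (∀ n, xs n ∈ S) → Tendsto xs atTop (𝓝 x) →
      Filter.limsup (fun n => fn n (xs n)) atTop ≤ f x) ∧
  (∀ x ∈ S, ∃ xs : ℕ → E, (∀ n, xs n ∈ S) ∧ Tendsto xs atTop (𝓝 x) ∧
      f x ≤ Filter.liminf (fun n => fn n (xs n)) atTop)
theorem stmt5 {d : ℕ} (a b : Fin d → ℝ) (hab : a ≤ b)
    (fn : ℕ → (Fin d → ℝ) → EReal) (f : (Fin d → ℝ) → EReal)
    (hconv : HypoConverges (Set.Icc a b) fn f)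
    (hmono : ∀ n : ℕ, ∀ x ∈ Set.Icc a b, ∀ y ∈ Set.Icc a b, x ≤ y → fn n x ≤ fn n y) :
    ∀ x ∈ Set.Icc a b, ∀ y ∈ Set.Icc a b, x ≤ y → f x ≤ f y := by
  intro x hx y hy hxy
  obtain ⟨hub, hlb⟩ := hconv
  obtain ⟨xs, hxsS, hxst, hxsl⟩ := hlb x hx
  set ys : ℕ → (Fin d → ℝ) := fun n i => max (xs n i) (y i) with hys
  have hysS : ∀ n, ys n ∈ Set.Icc a b := fun n =>
    ⟨fun i => le_max_of_le_right (hy.1 i), fun i => max_le ((hxsS n).2 i) (hy.2 i)⟩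
  have hyst : Tendsto ys atTop (𝓝 y) := by
    rw [tendsto_pi_nhds]
    intro i
    have : Tendsto (fun n => max (xs n i) (y i)) atTop (𝓝 (max (x i) (y i))) :=
      ((tendsto_pi_nhds.1 hxst i).max tendsto_const_nhds)
    simpa [max_eq_right (hxy i)] using this
  have hle : ∀ n, fn n (xs n) ≤ fn n (ys n) := fun n =>
    hmono n _ (hxsS n) _ (hysS n) (fun i => le_max_left _ _)
  calc f x ≤ Filter.liminf (fun n => fn n (xs n)) atTop := hxsl
    _ ≤ Filter.liminf (fun n => fn n (ys n)) atTop :=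
        Filter.liminf_le_liminf (Eventually.of_forall hle)
    _ ≤ Filter.limsup (fun n => fn n (ys n)) atTop := liminf_le_limsup
    _ ≤ f y := hub y hy ys hysS hyst
end

section
/- Suppose f^n : S → [-∞,∞] hypo-converge to f, each f^n is nondecreasing with respect to the componentwise order (f^n(x) ≤ f^n(y) when x ≤ y), x ∈ S, and y ∈ int S with x ≤ y. Then f(x) ≤ f(y). -/
open Filter Topology MeasureTheory

theorem stmt6 {d : ℕ} (S : Set (Fin d → ℝ)) (hS : IsClosed S)
    (fn : ℕ → (Fin d → ℝ) → EReal) (f : (Fin d → ℝ) → EReal)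
    (hconv : HypoConverges S fn f)
    (hmono : ∀ n : ℕ, ∀ x ∈ S, ∀ y ∈ S, x ≤ y → fn n x ≤ fn n y)
    (x : Fin d → ℝ) (hx : x ∈ S) (y : Fin d → ℝ) (hy : y ∈ interior S) (hxy : x ≤ y) :
    f x ≤ f y := by
  classical
  obtain ⟨hub, hlb⟩ := hconv
  obtain ⟨xs, hxsS, hxst, hxsli⟩ := hlb x hx
  have hyS : y ∈ S := interior_subset hy
  set ys : ℕ → Fin d → ℝ := fun n => xs n + (y - x) with hys
  have hyst : Tendsto ys atTop (𝓝 y) := by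
    have := hxst.add (tendsto_const_nhds (x := y - x))
    simpa using this
  have hSev : ∀ᶠ n in atTop, ys n ∈ S :=
    hyst.eventually_mem (mem_interior_iff_mem_nhds.mp hy)
  set zs : ℕ → Fin d → ℝ := fun n => if ys n ∈ S then ys n else y with hzs
  have hzsS : ∀ n, zs n ∈ S := by
    intro n
    simp only [hzs]
    split <;> assumption
  have hzseq : ∀ᶠ n in atTop, ys n = zs n := by
    filter_upwards [hSev] with n hn
    simp [hzs, hn]
  have hzst : Tendsto zs atTop (𝓝 y) := hyst.congr' hzseq
  have hle : ∀ᶠ n in atTop, fn n (xs n) ≤ fn n (zs n) := by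
    filter_upwards [hSev, hzseq] with n hn heq
    rw [← heq]
    exact hmono n (xs n) (hxsS n) (ys n) hn
      (le_add_of_nonneg_right (sub_nonneg.mpr hxy))
  calc f x ≤ Filter.liminf (fun n => fn n (xs n)) atTop := hxsli
    _ ≤ Filter.limsup (fun n => fn n (xs n)) atTop := liminf_le_limsup
    _ ≤ Filter.limsup (fun n => fn n (zs n)) atTop := limsup_le_limsup hle
    _ ≤ f y := hub y hyS zs hzsS hzst
end

section
/- For an equi-usc family: if f^n hypo-converge to f within an equi-usc subset of usc-fcns(S), then f^n converges to f pointwise on S. -/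
open Filter Topology MeasureTheory

theorem stmt8 {d : ℕ} (S : Set (EuclideanSpace ℝ (Fin d))) (hS : IsClosed S)
    (fn : ℕ → EuclideanSpace ℝ (Fin d) → EReal) (f : EuclideanSpace ℝ (Fin d) → EReal)
    (hconv : HypoConverges S fn f)
    (hequi : ∃ δ : EuclideanSpace ℝ (Fin d) → ℝ → ℝ → ℝ,
      (∀ x ε ρ, 0 < ε → 0 < ρ → 0 < δ x ε ρ) ∧
      (∀ n : ℕ, ∀ x ∈ S, ∀ ε ρ : ℝ, 0 < ε → 0 < ρ →
        ∀ y ∈ S, dist y x ≤ δ x ε ρ → fn n y ≤ max (fn n x + (ε : EReal)) ((-ρ : ℝ) : EReal)) ∧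
      (∀ x ∈ S, ∀ ε ρ : ℝ, 0 < ε → 0 < ρ →
        ∀ y ∈ S, dist y x ≤ δ x ε ρ → f y ≤ max (f x + (ε : EReal)) ((-ρ : ℝ) : EReal))) :
    ∀ x ∈ S, Tendsto (fun n => fn n x) atTop (𝓝 (f x)) := by
  obtain ⟨δ, hδpos, hδfn, hδf⟩ := hequi
  obtain ⟨hupper, hlower⟩ := hconv
  intro x hx
  have hsup : limsup (fun n => fn n x) atTop ≤ f x :=
    hupper x hx (fun _ => x) (fun _ => hx) tendsto_const_nhds
  set L := liminf (fun n => fn n x) atTop with hL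
  have hinf : f x ≤ L := by
    obtain ⟨xs, hxsS, hxs, hfl⟩ := hlower x hx
    have key : ∀ ε ρ : ℝ, 0 < ε → 0 < ρ →
        f x ≤ max (L + (ε : EReal)) ((-ρ : ℝ) : EReal) := by
      intro ε ρ hε hρ
      have hball : ∀ᶠ n in atTop, dist (xs n) x ≤ δ x ε ρ := by
        have := hxs.eventually (Metric.closedBall_mem_nhds x (hδpos x ε ρ hε hρ))
        filter_upwards [this] with n hn
        exact hn
      have hev : ∀ᶠ n in atTop,
          fn n (xs n) ≤ max (fn n x + (ε : EReal)) ((-ρ : ℝ) : EReal) := by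
        filter_upwards [hball] with n hn
        exact hδfn n x hx ε ρ hε hρ (xs n) (hxsS n) hn
      have hmono : Monotone (fun t : EReal => max (t + (ε : EReal)) ((-ρ : ℝ) : EReal)) :=
        fun a b hab => max_le_max (add_le_add hab le_rfl) le_rfl
      have hcont : ContinuousAt (fun t : EReal => max (t + (ε : EReal)) ((-ρ : ℝ) : EReal)) L := by
        have hadd : ContinuousAt (fun t : EReal => t + (ε : EReal)) L := by
          have := EReal.continuousAt_add (p := (L, (ε : EReal)))
            (Or.inr (by simp)) (Or.inr (by simp))
          have h3 : Tendsto (fun t : EReal => (t, (ε : EReal))) (𝓝 L) (𝓝 (L, (ε : EReal))) :=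
            tendsto_id.prodMk_nhds tendsto_const_nhds
          exact Filter.Tendsto.comp this h3
        exact continuous_max.continuousAt.comp (hadd.prodMk continuousAt_const)
      calc f x ≤ liminf (fun n => fn n (xs n)) atTop := hfl
        _ ≤ liminf (fun n => max (fn n x + (ε : EReal)) ((-ρ : ℝ) : EReal)) atTop :=
            liminf_le_liminf hev
        _ = max (L + (ε : EReal)) ((-ρ : ℝ) : EReal) :=
            (hmono.map_liminf_of_continuousAt (fun n => fn n x) hcont).symm
    by_cases hbot : f x = ⊥
    · simp [hbot]
    · have hfx : (⊥ : EReal) < f x := bot_lt_iff_ne_bot.2 hbot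
      obtain ⟨z, _, hz2⟩ := EReal.exists_between_coe_real hfx
      have heps : ∀ ε : ℝ, 0 < ε → f x ≤ L + (ε : EReal) := by
        intro ε hε
        set ρ : ℝ := max 1 (-z) with hρdef
        have hρpos : 0 < ρ := lt_of_lt_of_le one_pos (le_max_left _ _)
        have hρlt : ((-ρ : ℝ) : EReal) < f x := by
          refine lt_of_le_of_lt ?_ hz2
          have h1 : (-ρ : ℝ) ≤ z := by
            have := le_max_right 1 (-z); simp only [hρdef]; linarith
          exact_mod_cast h1
        rcases le_max_iff.1 (key ε ρ hε hρpos) with h | h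
        · exact h
        · exact absurd (lt_of_le_of_lt h hρlt) (lt_irrefl _)
      clear hz2 hfx hbot key hfl hxs hxsS hsup
      clear hL
      clear_value L
      refine EReal.le_of_forall_lt_iff_le.1 fun w hw => ?_
      induction L with
      | bot =>
        have := heps 1 one_pos
        simp only [EReal.bot_add] at this
        exact this.trans bot_le
      | coe l =>
        have hlw : l < w := by exact_mod_cast hw
        have := heps (w - l) (by linarith)
        calc f x ≤ (l : EReal) + ((w - l : ℝ) : EReal) := this
          _ = (w : EReal) := by norm_cast; ring
      | top => exact absurd hw (not_lt.2 le_top)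
  exact tendsto_of_le_liminf_of_limsup_le hinf hsup
end

section
/- (Convergence of suprema.) Suppose f^n : S → [-∞,∞] hypo-converge to f⁰ and there exists a compact set B ⊂ S such that for all n, argmax_{x∈S} f^n(x) ∩ B ≠ ∅. Then sup_{x∈S} f^n(x) → sup_{x∈S} f⁰(x). -/
open Filter Topology MeasureTheory

theorem stmt12 {d : ℕ} (S : Set (EuclideanSpace ℝ (Fin d))) (hS : IsClosed S)
    (fn : ℕ → EuclideanSpace ℝ (Fin d) → EReal) (f0 : EuclideanSpace ℝ (Fin d) → EReal)
    (husc : ∀ n, UpperSemicontinuousOn (fn n) S) (husc0 : UpperSemicontinuousOn f0 S)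
    (hne : ∀ n, ∃ x ∈ S, fn n x ≠ ⊥) (hne0 : ∃ x ∈ S, f0 x ≠ ⊥)
    (hconv : HypoConverges S fn f0)
    (B : Set (EuclideanSpace ℝ (Fin d))) (hB : IsCompact B) (hBS : B ⊆ S)
    (hargmax : ∀ n, ∃ x ∈ B, fn n x = ⨆ y ∈ S, fn n y) :
    Tendsto (fun n => ⨆ x ∈ S, fn n x) atTop (𝓝 (⨆ x ∈ S, f0 x)) := by
  set s : ℕ → EReal := fun n => ⨆ x ∈ S, fn n x with hs
  set s0 : EReal := ⨆ x ∈ S, f0 x with hs0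
  -- Lower bound: s0 ≤ liminf s
  have hlow : s0 ≤ liminf s atTop := by
    refine iSup₂_le fun x hx => ?_
    obtain ⟨xs, hxsS, hxst, hxsl⟩ := hconv.2 x hx
    refine hxsl.trans (liminf_le_liminf ?_)
    exact Eventually.of_forall fun n => le_biSup (fn n) (hxsS n)
  -- Upper bound: limsup s ≤ s0
  have hup : limsup s atTop ≤ s0 := by
    by_contra hcon
    push_neg at hcon
    obtain ⟨c, hc1, hc2⟩ := exists_between hcon
    -- frequently s n > c
    have hfreq : ∃ᶠ n in atTop, c < s n := frequently_lt_of_lt_limsup (by isBoundedDefault) hc2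
    obtain ⟨ψ, hψ, hψc⟩ := Filter.extraction_of_frequently_atTop hfreq
    -- argmax points
    choose xm hxmB hxmmax using hargmax
    -- compactness: subsequence of k ↦ xm (ψ k) converging in B
    obtain ⟨x, hxB, φ, hφ, hφt⟩ := hB.tendsto_subseq (fun k => hxmB (ψ k))
    set σ : ℕ → ℕ := ψ ∘ φ with hσdef
    have hσ : StrictMono σ := hψ.comp hφ
    set z : ℕ → EuclideanSpace ℝ (Fin d) := fun k => xm (σ k) with hz
    have hzt : Tendsto z atTop (𝓝 x) := hφt
    -- interpolated sequence
    set cidx : ℕ → ℕ := fun n => Nat.findGreatest (fun k => σ k ≤ n) n with hcidx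
    set y : ℕ → EuclideanSpace ℝ (Fin d) := fun n => z (cidx n) with hy
    have hcσ : ∀ k, cidx (σ k) = k := by
      intro k
      have h1 : k ≤ cidx (σ k) :=
        Nat.le_findGreatest (hσ.le_apply) le_rfl
      have h2 : cidx (σ k) ≤ k := by
        have hp : σ (cidx (σ k)) ≤ σ k :=
          Nat.findGreatest_spec (P := fun j => σ j ≤ σ k) hσ.le_apply le_rfl
        exact hσ.le_iff_le.mp hp
      omega
    have hct : Tendsto cidx atTop atTop := by
      refine tendsto_atTop_atTop.2 fun b => ⟨σ b, fun n hn => ?_⟩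
      exact Nat.le_findGreatest ((hσ.le_apply).trans hn) hn
    have hyt : Tendsto y atTop (𝓝 x) := hzt.comp hct
    have hyS : ∀ n, y n ∈ S := fun n => hBS (hxmB _)
    have hup1 : limsup (fun n => fn n (y n)) atTop ≤ f0 x :=
      hconv.1 x (hBS hxB) y hyS hyt
    have hkey : (fun k => fn (σ k) (z k)) = (fun n => fn n (y n)) ∘ σ := by
      funext k
      simp only [Function.comp, hy, hcσ k]
    have hsub : limsup (fun k => fn (σ k) (z k)) atTop ≤ limsup (fun n => fn n (y n)) atTop := by
      rw [hkey, Filter.limsup_comp]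
      exact limsup_le_limsup_of_le (hσ.tendsto_atTop) (by isBoundedDefault) (by isBoundedDefault)
    have hval : ∀ k, fn (σ k) (z k) = s (σ k) := fun k => hxmmax (σ k)
    have hge : c ≤ limsup (fun k => fn (σ k) (z k)) atTop := by
      refine le_limsup_of_frequently_le (Eventually.of_forall fun k => ?_).frequently
        (by isBoundedDefault)
      rw [hval k]
      exact (hψc (φ k)).le
    have : c ≤ s0 := hge.trans (hsub.trans (hup1.trans (le_biSup f0 (hBS hxB))))
    exact absurd (this.trans_lt hc1) (lt_irrefl c)
  exact tendsto_of_le_liminf_of_limsup_le hlow hup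
end

section
/- (Monotone transformations preserve hypo-limits of shape classes.) Let h : [-∞,∞] → [-∞,∞] be strictly increasing and continuous (hence a homeomorphism onto its image with continuous inverse h⁻¹). Suppose f^n = h ∘ g^n hypo-converge to f, where each g^n : S → [-∞,∞] is concave. Then f = h ∘ g for some concave function g : S → [-∞,∞]; specifically, g = h⁻¹ ∘ f and g^n hypo-converge to g. -/
open Filter Topology MeasureTheory

theorem stmt19 {d : ℕ} (S : Set (EuclideanSpace ℝ (Fin d))) (hS : IsClosed S)
    (hSconv : Convex ℝ S)
    (h : EReal → EReal) (hmono : StrictMono h) (hcont : Continuous h)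
    (gn : ℕ → EuclideanSpace ℝ (Fin d) → EReal)
    (hgccv : ∀ n : ℕ, ∀ x ∈ S, ∀ y ∈ S, ∀ l : ℝ, 0 < l → l < 1 →
      ((l : EReal)) * gn n x + (((1 - l : ℝ) : EReal)) * gn n y ≤ gn n (l • x + (1 - l) • y))
    (f : EuclideanSpace ℝ (Fin d) → EReal)
    (hconv : HypoConverges S (fun n x => h (gn n x)) f) :
    ∃ g : EuclideanSpace ℝ (Fin d) → EReal,
      (∀ x ∈ S, ∀ y ∈ S, ∀ l : ℝ, 0 < l → l < 1 →
        ((l : EReal)) * g x + (((1 - l : ℝ) : EReal)) * g y ≤ g (l • x + (1 - l) • y)) ∧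
      (∀ x ∈ S, f x = h (g x)) ∧
      HypoConverges S gn g := by
  -- Transfer lemmas for limsup/liminf through h
  have hml : ∀ a : ℕ → EReal, h (limsup a atTop) = limsup (fun n => h (a n)) atTop := by
    intro a
    exact hmono.monotone.map_limsup_of_continuousAt a hcont.continuousAt
  have hmli : ∀ a : ℕ → EReal, h (liminf a atTop) = liminf (fun n => h (a n)) atTop := by
    intro a
    exact hmono.monotone.map_liminf_of_continuousAt a hcont.continuousAt
  -- f x lies in the range of h for x ∈ S
  have hfr : ∀ x ∈ S, ∃ y : EReal, h y = f x := by
    intro x hx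
    have h1 : h ⊥ ≤ f x := by
      have := hconv.1 x hx (fun _ => x) (fun _ => hx) tendsto_const_nhds
      refine le_trans ?_ this
      exact le_limsup_of_frequently_le
        (Frequently.of_forall fun n => hmono.monotone bot_le)
    have h2 : f x ≤ h ⊤ := by
      obtain ⟨xs, hmem, hts, hli⟩ := hconv.2 x hx
      refine le_trans hli ?_
      exact liminf_le_of_frequently_le
        (Frequently.of_forall fun n => hmono.monotone le_top)
    have hIVT : Set.Icc (h ⊥) (h ⊤) ⊆ h '' Set.univ := by
      have hpc : IsPreconnected (Set.univ : Set EReal) :=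
        Set.ordConnected_univ.isPreconnected
      exact hpc.intermediate_value (Set.mem_univ ⊥) (Set.mem_univ ⊤)
        hcont.continuousOn
    obtain ⟨y, _, hy⟩ := hIVT ⟨h1, h2⟩
    exact ⟨y, hy⟩
  classical
  set g : EuclideanSpace ℝ (Fin d) → EReal :=
    fun x => if hx : ∃ y, h y = f x then hx.choose else ⊥ with hgdef
  have hg : ∀ x ∈ S, h (g x) = f x := by
    intro x hx
    have hex := hfr x hx
    simp only [hgdef, dif_pos hex]
    exact hex.choose_spec
  -- Hypo-convergence of gn to g
  have hup : ∀ x ∈ S, ∀ xs : ℕ → EuclideanSpace ℝ (Fin d), (∀ n, xs n ∈ S) →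
      Tendsto xs atTop (𝓝 x) →
      limsup (fun n => gn n (xs n)) atTop ≤ g x := by
    intro x hx xs hmem hts
    have := hconv.1 x hx xs hmem hts
    rw [← hg x hx] at this
    rw [← hml (fun n => gn n (xs n))] at this
    exact (hmono.le_iff_le).mp this
  have hlo : ∀ x ∈ S, ∃ xs : ℕ → EuclideanSpace ℝ (Fin d), (∀ n, xs n ∈ S) ∧
      Tendsto xs atTop (𝓝 x) ∧
      g x ≤ liminf (fun n => gn n (xs n)) atTop := by
    intro x hx
    obtain ⟨xs, hmem, hts, hli⟩ := hconv.2 x hx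
    refine ⟨xs, hmem, hts, ?_⟩
    rw [← hg x hx] at hli
    rw [← hmli (fun n => gn n (xs n))] at hli
    exact (hmono.le_iff_le).mp hli
  -- multiplication by a positive real constant commutes with liminf
  have hmul : ∀ (c : ℝ), 0 < c → ∀ a : ℕ → EReal,
      (c : EReal) * liminf a atTop = liminf (fun n => (c : EReal) * a n) atTop := by
    intro c hc a
    have hmono' : Monotone (fun z : EReal => (c : EReal) * z) := by
      intro u v huv
      exact mul_le_mul_of_nonneg_left huv (by exact_mod_cast hc.le)
    have hcont' : ContinuousAt (fun z : EReal => (c : EReal) * z) (liminf a atTop) := by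
      have : ContinuousAt (fun p : EReal × EReal => p.1 * p.2)
          ((c : EReal), liminf a atTop) := by
        apply EReal.continuousAt_mul
        · left; show (c : EReal) ≠ 0; exact_mod_cast hc.ne'
        · left; show (c : EReal) ≠ 0; exact_mod_cast hc.ne'
        · left; exact (EReal.coe_ne_bot c)
        · left; exact (EReal.coe_ne_top c)
      exact this.comp (Continuous.continuousAt (by fun_prop))
    exact hmono'.map_liminf_of_continuousAt a hcont'
  refine ⟨g, ?_, fun x hx => (hg x hx).symm, hup, hlo⟩
  -- concavity of g
  intro x hx y hy l hl0 hl1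
  obtain ⟨xs, hxm, hxt, hxl⟩ := hlo x hx
  obtain ⟨ys, hym, hyt, hyl⟩ := hlo y hy
  have hzmem : ∀ n, l • xs n + (1 - l) • ys n ∈ S := fun n =>
    hSconv (hxm n) (hym n) hl0.le (by linarith) (by ring)
  have hzt : Tendsto (fun n => l • xs n + (1 - l) • ys n) atTop
      (𝓝 (l • x + (1 - l) • y)) :=
    (hxt.const_smul l).add (hyt.const_smul (1 - l))
  have hz : limsup (fun n => gn n (l • xs n + (1 - l) • ys n)) atTop
      ≤ g (l • x + (1 - l) • y) :=
    hup _ (hSconv hx hy hl0.le (by linarith) (by ring)) _ hzmem hzt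
  calc ((l : EReal)) * g x + (((1 - l : ℝ) : EReal)) * g y
      ≤ (l : EReal) * liminf (fun n => gn n (xs n)) atTop
        + ((1 - l : ℝ) : EReal) * liminf (fun n => gn n (ys n)) atTop := by
        refine add_le_add ?_ ?_
        · exact mul_le_mul_of_nonneg_left hxl (EReal.coe_nonneg.mpr hl0.le)
        · exact mul_le_mul_of_nonneg_left hyl (EReal.coe_nonneg.mpr (by linarith))
    _ = liminf (fun n => (l : EReal) * gn n (xs n)) atTop
        + liminf (fun n => ((1 - l : ℝ) : EReal) * gn n (ys n)) atTop := by
        rw [hmul l hl0, hmul (1 - l) (by linarith)]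
    _ ≤ liminf (fun n => (l : EReal) * gn n (xs n)
        + ((1 - l : ℝ) : EReal) * gn n (ys n)) atTop := EReal.le_liminf_add
    _ ≤ liminf (fun n => gn n (l • xs n + (1 - l) • ys n)) atTop := by
        exact liminf_le_liminf (Eventually.of_forall fun n =>
          hgccv n (xs n) (hxm n) (ys n) (hym n) l hl0 hl1)
    _ ≤ limsup (fun n => gn n (l • xs n + (1 - l) • ys n)) atTop := liminf_le_limsup
    _ ≤ g (l • x + (1 - l) • y) := hz
end
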